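/- Let p, q ∈ ℝ and let C = (id ⊗ transpose)(C_{N_{p,q}}) ∈ M₃(ℂ) ⊗ M₃(ℂ) be the partial transpose of the Choi matrix of N_{p,q}. Then: the vector |0⟩⊗|2⟩ − |1⟩⊗|1⟩ + |2⟩⊗|0⟩ is an eigenvector of C with eigenvalue 1−2p; the five vectors |0⟩⊗|0⟩, |2⟩⊗|2⟩, |0⟩⊗|1⟩+|1⟩⊗|0⟩, |1⟩⊗|2⟩+|2⟩⊗|1⟩, and |0⟩⊗|2⟩+2|1⟩⊗|1⟩+|2⟩⊗|0⟩ are eigenvectors of C with eigenvalue 1 − p/2 − 9q/10; the three vectors |0⟩⊗|1⟩−|1⟩⊗|0⟩, |1⟩⊗|2⟩−|2⟩⊗|1⟩, and |0⟩⊗|2⟩−|2⟩⊗|0⟩ are eigenvectors of C with eigenvalue (3p+3q−2)/2. In particular, C has only the eigenvalues 1−2p (multiplicity 1), 1−p/2−9q/10 (multiplicity 5), and (3p+3q−2)/2 (multiplicity 3). -/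

import Mathlib

open Matrix BigOperators
open scoped Kronecker ComplexOrder

noncomputable section
set_option maxHeartbeats 8000000


/-- `Φ^{2→2}_2`. -/
def Phi2 (A : Matrix (Fin 3) (Fin 3) ℂ) : Matrix (Fin 3) (Fin 3) ℂ :=
  (1 / 2 : ℂ) •
    !![A 0 0 + A 1 1, A 1 2, -(A 0 2);
       A 2 1, A 0 0 + A 2 2, A 0 1;
       -(A 2 0), A 1 0, A 1 1 + A 2 2]

/-- `Φ^{2→2}_4`. -/
def Phi4 (A : Matrix (Fin 3) (Fin 3) ℂ) : Matrix (Fin 3) (Fin 3) ℂ :=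
  (1 / 10 : ℂ) •
    !![A 0 0 + 3 * A 1 1 + 6 * A 2 2, -2 * A 0 1 - 3 * A 1 2, A 0 2;
       -2 * A 1 0 - 3 * A 2 1, 3 * A 0 0 + 4 * A 1 1 + 3 * A 2 2, -3 * A 0 1 - 2 * A 1 2;
       A 2 0, -3 * A 1 0 - 2 * A 2 1, 6 * A 0 0 + 3 * A 1 1 + A 2 2]

/-- `N_{p,q} = (1-p-q)Φ₀ + pΦ₂ + qΦ₄` (with `Φ₀ = id`). -/
def Nmap (p q : ℝ) (A : Matrix (Fin 3) (Fin 3) ℂ) : Matrix (Fin 3) (Fin 3) ℂ :=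
  ((1 - p - q : ℝ) : ℂ) • A + ((p : ℝ) : ℂ) • Phi2 A + ((q : ℝ) : ℂ) • Phi4 A

/-- The Choi matrix `C_Θ = ∑_{i,j} E_{ij} ⊗ Θ(E_{ij})`. -/
def choi {k n : ℕ} (Θ : Matrix (Fin k) (Fin k) ℂ → Matrix (Fin n) (Fin n) ℂ) :
    Matrix (Fin k × Fin n) (Fin k × Fin n) ℂ :=
  fun x y => Θ (Matrix.single x.1 y.1 1) x.2 y.2

/-- The partial transpose `(id ⊗ transpose)(C_Θ)` of the Choi matrix. -/
def choiPT {k n : ℕ} (Θ : Matrix (Fin k) (Fin k) ℂ → Matrix (Fin n) (Fin n) ℂ) :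
    Matrix (Fin k × Fin n) (Fin k × Fin n) ℂ :=
  fun x y => Θ (Matrix.single x.1 y.1 1) y.2 x.2

/-- `Θ` is PPT if the partial transpose of its Choi matrix is positive semidefinite. -/
def IsPPT {k n : ℕ} (Θ : Matrix (Fin k) (Fin k) ℂ → Matrix (Fin n) (Fin n) ℂ) : Prop :=
  (choiPT Θ).PosSemidef

/-- `Θ` is entanglement-breaking if its Choi matrix is separable. -/
def IsEBT {k n : ℕ} (Θ : Matrix (Fin k) (Fin k) ℂ → Matrix (Fin n) (Fin n) ℂ) : Prop :=
  ∃ (N : ℕ) (A : Fin N → Matrix (Fin k) (Fin k) ℂ) (B : Fin N → Matrix (Fin n) (Fin n) ℂ),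
    (∀ t, (A t).PosSemidef) ∧ (∀ t, (B t).PosSemidef) ∧ choi Θ = ∑ t, A t ⊗ₖ B t

/-- standard basis vector `|a⟩ ⊗ |b⟩` of `ℂ³ ⊗ ℂ³`. -/
def ket3 (a b : Fin 3) : Fin 3 × Fin 3 → ℂ :=
  fun x => if x = (a, b) then 1 else 0


open Polynomial in
lemma my_charpoly_conj {n R : Type*} [Fintype n] [DecidableEq n] [CommRing R]
    (U D V : Matrix n n R) (hUV : U * V = 1) : (U * D * V).charpoly = D.charpoly := by
  have hmap : (U.map (C : R →+* R[X])) * (V.map C) = 1 := by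
    rw [← Matrix.map_mul, hUV, Matrix.map_one _ (map_zero C) (map_one C)]
  have h1 : charmatrix (U * D * V) = (U.map C) * charmatrix D * (V.map C) := by
    unfold charmatrix
    rw [Matrix.mul_sub, Matrix.sub_mul]
    congr 1
    · rw [← (Matrix.scalar_commute (X : R[X]) (Commute.all X) (U.map C)).eq,
        Matrix.mul_assoc, hmap, Matrix.mul_one]
    · rw [RingHom.mapMatrix_apply, RingHom.mapMatrix_apply, Matrix.map_mul, Matrix.map_mul]
  rw [Matrix.charpoly, h1, Matrix.det_mul, Matrix.det_mul, Matrix.charpoly]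
  have h2 : (U.map (C : R →+* R[X])).det * (V.map C).det = 1 := by
    rw [← Matrix.det_mul, hmap, Matrix.det_one]
  calc (U.map (C : R →+* R[X])).det * (charmatrix D).det * (V.map C).det
      = (charmatrix D).det * ((U.map C).det * (V.map C).det) := by ring
    _ = (charmatrix D).det := by rw [h2, mul_one]

open Polynomial in
lemma my_charpoly_diag {n R : Type*} [Fintype n] [DecidableEq n] [CommRing R]
    (d : n → R) : (Matrix.diagonal d).charpoly = ∏ i, (X - C (d i)) := by
  have h : charmatrix (Matrix.diagonal d) = Matrix.diagonal (fun i => (X : R[X]) - C (d i)) := by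
    unfold charmatrix
    rw [RingHom.mapMatrix_apply, Matrix.diagonal_map (map_zero C), Matrix.scalar_apply,
      Matrix.diagonal_sub]
  rw [Matrix.charpoly, h, Matrix.det_diagonal]

/-- columns of the eigenvector matrix -/
def Ucol (j : Fin 3 × Fin 3) : Fin 3 × Fin 3 → ℂ :=
  if j = (0,0) then ket3 0 0
  else if j = (0,1) then ket3 0 1 + ket3 1 0
  else if j = (0,2) then ket3 0 2 - ket3 2 0
  else if j = (1,0) then ket3 0 1 - ket3 1 0
  else if j = (1,1) then ket3 0 2 + (2:ℂ) • ket3 1 1 + ket3 2 0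
  else if j = (1,2) then ket3 1 2 + ket3 2 1
  else if j = (2,0) then ket3 0 2 - ket3 1 1 + ket3 2 0
  else if j = (2,1) then ket3 1 2 - ket3 2 1
  else ket3 2 2

def Umat : Matrix (Fin 3 × Fin 3) (Fin 3 × Fin 3) ℂ := fun x j => Ucol j x

/-- rows of the inverse of the eigenvector matrix -/
def Vmat : Matrix (Fin 3 × Fin 3) (Fin 3 × Fin 3) ℂ := fun x =>
  if x = (0,0) then ket3 0 0
  else if x = (0,1) then (1/2:ℂ) • (ket3 0 1 + ket3 1 0)
  else if x = (0,2) then (1/2:ℂ) • (ket3 0 2 - ket3 2 0)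
  else if x = (1,0) then (1/2:ℂ) • (ket3 0 1 - ket3 1 0)
  else if x = (1,1) then (1/6:ℂ) • ket3 0 2 + (1/3:ℂ) • ket3 1 1 + (1/6:ℂ) • ket3 2 0
  else if x = (1,2) then (1/2:ℂ) • (ket3 1 2 + ket3 2 1)
  else if x = (2,0) then (1/3:ℂ) • (ket3 0 2 - ket3 1 1 + ket3 2 0)
  else if x = (2,1) then (1/2:ℂ) • (ket3 1 2 - ket3 2 1)
  else ket3 2 2

/-- the eigenvalues -/
def lamf (p q : ℝ) : Fin 3 × Fin 3 → ℂ := fun j =>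
  if j = (2,0) then ((1 - 2 * p : ℝ) : ℂ)
  else if j = (0,2) ∨ j = (1,0) ∨ j = (2,1) then (((3 * p + 3 * q - 2) / 2 : ℝ) : ℂ)
  else ((1 - p / 2 - 9 * q / 10 : ℝ) : ℂ)



def Mex (p q : ℝ) : Matrix (Fin 3 × Fin 3) (Fin 3 × Fin 3) ℂ := fun x y =>
  if x = (0,0) ∧ y = (0,0) then 1 - (p:ℂ)/2 - 9*(q:ℂ)/10
  else if x = (0,1) ∧ y = (0,1) then (p:ℂ)/2 + 3*(q:ℂ)/10
  else if x = (0,1) ∧ y = (1,0) then 1 - (p:ℂ) - 6*(q:ℂ)/5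
  else if x = (0,2) ∧ y = (0,2) then 3*(q:ℂ)/5
  else if x = (0,2) ∧ y = (1,1) then (p:ℂ)/2 - 3*(q:ℂ)/10
  else if x = (0,2) ∧ y = (2,0) then 1 - 3*(p:ℂ)/2 - 9*(q:ℂ)/10
  else if x = (1,0) ∧ y = (0,1) then 1 - (p:ℂ) - 6*(q:ℂ)/5
  else if x = (1,0) ∧ y = (1,0) then (p:ℂ)/2 + 3*(q:ℂ)/10
  else if x = (1,1) ∧ y = (0,2) then (p:ℂ)/2 - 3*(q:ℂ)/10
  else if x = (1,1) ∧ y = (1,1) then 1 - (p:ℂ) - 3*(q:ℂ)/5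
  else if x = (1,1) ∧ y = (2,0) then (p:ℂ)/2 - 3*(q:ℂ)/10
  else if x = (1,2) ∧ y = (1,2) then (p:ℂ)/2 + 3*(q:ℂ)/10
  else if x = (1,2) ∧ y = (2,1) then 1 - (p:ℂ) - 6*(q:ℂ)/5
  else if x = (2,0) ∧ y = (0,2) then 1 - 3*(p:ℂ)/2 - 9*(q:ℂ)/10
  else if x = (2,0) ∧ y = (1,1) then (p:ℂ)/2 - 3*(q:ℂ)/10
  else if x = (2,0) ∧ y = (2,0) then 3*(q:ℂ)/5
  else if x = (2,1) ∧ y = (1,2) then 1 - (p:ℂ) - 6*(q:ℂ)/5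
  else if x = (2,1) ∧ y = (2,1) then (p:ℂ)/2 + 3*(q:ℂ)/10
  else if x = (2,2) ∧ y = (2,2) then 1 - (p:ℂ)/2 - 9*(q:ℂ)/10
  else 0

/-- eigenvectors and eigenvalues of the partial transpose of the Choi
matrix of `N_{p,q}`; it has only the eigenvalues `1-2p` (multiplicity 1),
`1-p/2-9q/10` (multiplicity 5) and `(3p+3q-2)/2` (multiplicity 3), as recorded by
its characteristic polynomial. -/
theorem stmt_4 (p q : ℝ) :
    (choiPT (Nmap p q)).mulVec (ket3 0 2 - ket3 1 1 + ket3 2 0)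
        = ((1 - 2 * p : ℝ) : ℂ) • (ket3 0 2 - ket3 1 1 + ket3 2 0)
    ∧ (choiPT (Nmap p q)).mulVec (ket3 0 0)
        = ((1 - p / 2 - 9 * q / 10 : ℝ) : ℂ) • ket3 0 0
    ∧ (choiPT (Nmap p q)).mulVec (ket3 2 2)
        = ((1 - p / 2 - 9 * q / 10 : ℝ) : ℂ) • ket3 2 2
    ∧ (choiPT (Nmap p q)).mulVec (ket3 0 1 + ket3 1 0)
        = ((1 - p / 2 - 9 * q / 10 : ℝ) : ℂ) • (ket3 0 1 + ket3 1 0)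
    ∧ (choiPT (Nmap p q)).mulVec (ket3 1 2 + ket3 2 1)
        = ((1 - p / 2 - 9 * q / 10 : ℝ) : ℂ) • (ket3 1 2 + ket3 2 1)
    ∧ (choiPT (Nmap p q)).mulVec (ket3 0 2 + (2 : ℂ) • ket3 1 1 + ket3 2 0)
        = ((1 - p / 2 - 9 * q / 10 : ℝ) : ℂ) • (ket3 0 2 + (2 : ℂ) • ket3 1 1 + ket3 2 0)
    ∧ (choiPT (Nmap p q)).mulVec (ket3 0 1 - ket3 1 0)
        = (((3 * p + 3 * q - 2) / 2 : ℝ) : ℂ) • (ket3 0 1 - ket3 1 0)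
    ∧ (choiPT (Nmap p q)).mulVec (ket3 1 2 - ket3 2 1)
        = (((3 * p + 3 * q - 2) / 2 : ℝ) : ℂ) • (ket3 1 2 - ket3 2 1)
    ∧ (choiPT (Nmap p q)).mulVec (ket3 0 2 - ket3 2 0)
        = (((3 * p + 3 * q - 2) / 2 : ℝ) : ℂ) • (ket3 0 2 - ket3 2 0)
    ∧ (choiPT (Nmap p q)).charpoly
        = (Polynomial.X - Polynomial.C ((1 - 2 * p : ℝ) : ℂ))
          * (Polynomial.X - Polynomial.C ((1 - p / 2 - 9 * q / 10 : ℝ) : ℂ)) ^ 5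
          * (Polynomial.X - Polynomial.C (((3 * p + 3 * q - 2) / 2 : ℝ) : ℂ)) ^ 3 := by
  have hMval : choiPT (Nmap p q) = Mex p q := by
    ext x y
    fin_cases x <;> fin_cases y <;>
    · simp (config := { decide := true }) only [choiPT, Nmap, Phi2, Phi4, Mex, Matrix.single,
        Matrix.smul_apply, Matrix.add_apply, Matrix.of_apply, Matrix.cons_val',
        Matrix.cons_val_zero, Matrix.cons_val_one, Matrix.head_cons, Matrix.head_fin_const,
        Matrix.empty_val', Matrix.cons_val_fin_one, Matrix.cons_val_two, Matrix.vecHead,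
        Matrix.vecTail, Prod.mk.injEq, Fin.reduceEq, and_true, true_and, and_false,
        false_and, if_true, if_false, ite_true, ite_false, and_self, smul_eq_mul, Pi.add_apply, Pi.smul_apply,
        Function.comp_apply, Fin.isValue, mul_ite, ite_mul, mul_zero, zero_mul, mul_one, one_mul, add_zero, zero_add]
      try norm_num [Fin.ext_iff, Prod.ext_iff]
      try (push_cast; ring)
  rw [hMval]
  have e1 : (Mex p q).mulVec (ket3 0 2 - ket3 1 1 + ket3 2 0)
      = ((1 - 2 * p : ℝ) : ℂ) • (ket3 0 2 - ket3 1 1 + ket3 2 0) := by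
    funext x
    fin_cases x <;>
    · simp (config := { decide := true }) only [Mex, ket3, Matrix.mulVec, dotProduct, Fintype.sum_prod_type,
        Fin.sum_univ_three, Prod.mk.injEq, Fin.reduceEq, and_true, true_and, and_false,
        false_and, if_true, if_false, ite_true, ite_false, and_self, smul_eq_mul, Pi.add_apply, Pi.sub_apply,
        Pi.smul_apply, Fin.isValue, mul_ite, ite_mul, mul_zero, zero_mul, mul_one, one_mul, add_zero, zero_add]
      try norm_num [Fin.ext_iff, Prod.ext_iff]
      try (push_cast; ring)
  have e2 : (Mex p q).mulVec (ket3 0 0)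
      = ((1 - p / 2 - 9 * q / 10 : ℝ) : ℂ) • (ket3 0 0) := by
    funext x
    fin_cases x <;>
    · simp (config := { decide := true }) only [Mex, ket3, Matrix.mulVec, dotProduct, Fintype.sum_prod_type,
        Fin.sum_univ_three, Prod.mk.injEq, Fin.reduceEq, and_true, true_and, and_false,
        false_and, if_true, if_false, ite_true, ite_false, and_self, smul_eq_mul, Pi.add_apply, Pi.sub_apply,
        Pi.smul_apply, Fin.isValue, mul_ite, ite_mul, mul_zero, zero_mul, mul_one, one_mul, add_zero, zero_add]
      try norm_num [Fin.ext_iff, Prod.ext_iff]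
      try (push_cast; ring)
  have e3 : (Mex p q).mulVec (ket3 2 2)
      = ((1 - p / 2 - 9 * q / 10 : ℝ) : ℂ) • (ket3 2 2) := by
    funext x
    fin_cases x <;>
    · simp (config := { decide := true }) only [Mex, ket3, Matrix.mulVec, dotProduct, Fintype.sum_prod_type,
        Fin.sum_univ_three, Prod.mk.injEq, Fin.reduceEq, and_true, true_and, and_false,
        false_and, if_true, if_false, ite_true, ite_false, and_self, smul_eq_mul, Pi.add_apply, Pi.sub_apply,
        Pi.smul_apply, Fin.isValue, mul_ite, ite_mul, mul_zero, zero_mul, mul_one, one_mul, add_zero, zero_add]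
      try norm_num [Fin.ext_iff, Prod.ext_iff]
      try (push_cast; ring)
  have e4 : (Mex p q).mulVec (ket3 0 1 + ket3 1 0)
      = ((1 - p / 2 - 9 * q / 10 : ℝ) : ℂ) • (ket3 0 1 + ket3 1 0) := by
    funext x
    fin_cases x <;>
    · simp (config := { decide := true }) only [Mex, ket3, Matrix.mulVec, dotProduct, Fintype.sum_prod_type,
        Fin.sum_univ_three, Prod.mk.injEq, Fin.reduceEq, and_true, true_and, and_false,
        false_and, if_true, if_false, ite_true, ite_false, and_self, smul_eq_mul, Pi.add_apply, Pi.sub_apply,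
        Pi.smul_apply, Fin.isValue, mul_ite, ite_mul, mul_zero, zero_mul, mul_one, one_mul, add_zero, zero_add]
      try norm_num [Fin.ext_iff, Prod.ext_iff]
      try (push_cast; ring)
  have e5 : (Mex p q).mulVec (ket3 1 2 + ket3 2 1)
      = ((1 - p / 2 - 9 * q / 10 : ℝ) : ℂ) • (ket3 1 2 + ket3 2 1) := by
    funext x
    fin_cases x <;>
    · simp (config := { decide := true }) only [Mex, ket3, Matrix.mulVec, dotProduct, Fintype.sum_prod_type,
        Fin.sum_univ_three, Prod.mk.injEq, Fin.reduceEq, and_true, true_and, and_false,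
        false_and, if_true, if_false, ite_true, ite_false, and_self, smul_eq_mul, Pi.add_apply, Pi.sub_apply,
        Pi.smul_apply, Fin.isValue, mul_ite, ite_mul, mul_zero, zero_mul, mul_one, one_mul, add_zero, zero_add]
      try norm_num [Fin.ext_iff, Prod.ext_iff]
      try (push_cast; ring)
  have e6 : (Mex p q).mulVec (ket3 0 2 + (2 : ℂ) • ket3 1 1 + ket3 2 0)
      = ((1 - p / 2 - 9 * q / 10 : ℝ) : ℂ) • (ket3 0 2 + (2 : ℂ) • ket3 1 1 + ket3 2 0) := by
    funext x
    fin_cases x <;>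
    · simp (config := { decide := true }) only [Mex, ket3, Matrix.mulVec, dotProduct, Fintype.sum_prod_type,
        Fin.sum_univ_three, Prod.mk.injEq, Fin.reduceEq, and_true, true_and, and_false,
        false_and, if_true, if_false, ite_true, ite_false, and_self, smul_eq_mul, Pi.add_apply, Pi.sub_apply,
        Pi.smul_apply, Fin.isValue, mul_ite, ite_mul, mul_zero, zero_mul, mul_one, one_mul, add_zero, zero_add]
      try norm_num [Fin.ext_iff, Prod.ext_iff]
      try (push_cast; ring)
  have e7 : (Mex p q).mulVec (ket3 0 1 - ket3 1 0)
      = (((3 * p + 3 * q - 2) / 2 : ℝ) : ℂ) • (ket3 0 1 - ket3 1 0) := by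
    funext x
    fin_cases x <;>
    · simp (config := { decide := true }) only [Mex, ket3, Matrix.mulVec, dotProduct, Fintype.sum_prod_type,
        Fin.sum_univ_three, Prod.mk.injEq, Fin.reduceEq, and_true, true_and, and_false,
        false_and, if_true, if_false, ite_true, ite_false, and_self, smul_eq_mul, Pi.add_apply, Pi.sub_apply,
        Pi.smul_apply, Fin.isValue, mul_ite, ite_mul, mul_zero, zero_mul, mul_one, one_mul, add_zero, zero_add]
      try norm_num [Fin.ext_iff, Prod.ext_iff]
      try (push_cast; ring)
  have e8 : (Mex p q).mulVec (ket3 1 2 - ket3 2 1)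
      = (((3 * p + 3 * q - 2) / 2 : ℝ) : ℂ) • (ket3 1 2 - ket3 2 1) := by
    funext x
    fin_cases x <;>
    · simp (config := { decide := true }) only [Mex, ket3, Matrix.mulVec, dotProduct, Fintype.sum_prod_type,
        Fin.sum_univ_three, Prod.mk.injEq, Fin.reduceEq, and_true, true_and, and_false,
        false_and, if_true, if_false, ite_true, ite_false, and_self, smul_eq_mul, Pi.add_apply, Pi.sub_apply,
        Pi.smul_apply, Fin.isValue, mul_ite, ite_mul, mul_zero, zero_mul, mul_one, one_mul, add_zero, zero_add]
      try norm_num [Fin.ext_iff, Prod.ext_iff]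
      try (push_cast; ring)
  have e9 : (Mex p q).mulVec (ket3 0 2 - ket3 2 0)
      = (((3 * p + 3 * q - 2) / 2 : ℝ) : ℂ) • (ket3 0 2 - ket3 2 0) := by
    funext x
    fin_cases x <;>
    · simp (config := { decide := true }) only [Mex, ket3, Matrix.mulVec, dotProduct, Fintype.sum_prod_type,
        Fin.sum_univ_three, Prod.mk.injEq, Fin.reduceEq, and_true, true_and, and_false,
        false_and, if_true, if_false, ite_true, ite_false, and_self, smul_eq_mul, Pi.add_apply, Pi.sub_apply,
        Pi.smul_apply, Fin.isValue, mul_ite, ite_mul, mul_zero, zero_mul, mul_one, one_mul, add_zero, zero_add]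
      try norm_num [Fin.ext_iff, Prod.ext_iff]
      try (push_cast; ring)
  refine ⟨e1, e2, e3, e4, e5, e6, e7, e8, e9, ?_⟩
  have hUV : Umat * Vmat = 1 := by
    ext x y
    fin_cases x <;> fin_cases y <;>
    · simp (config := { decide := true }) only [Umat, Ucol, Vmat, Matrix.mul_apply, Fintype.sum_prod_type,
        Fin.sum_univ_three, ket3, Matrix.one_apply, Prod.mk.injEq, Fin.reduceEq, and_true, true_and, and_false,
        false_and, if_true, if_false, ite_true, ite_false, and_self, Pi.add_apply,
        Pi.sub_apply, Pi.smul_apply, smul_eq_mul, Fin.isValue,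
        mul_ite, ite_mul, mul_zero, zero_mul, mul_one, one_mul, add_zero, zero_add]
      try norm_num [Fin.ext_iff, Prod.ext_iff]
  have hMU : Mex p q * Umat = Umat * Matrix.diagonal (lamf p q) := by
    ext x j
    rw [Matrix.mul_apply, Matrix.mul_diagonal]
    fin_cases x <;> fin_cases j <;>
    · simp (config := { decide := true }) only [Mex, Umat, Ucol, lamf,
        Fintype.sum_prod_type, Fin.sum_univ_three, ket3,
        Prod.mk.injEq, Fin.reduceEq, and_true, true_and, and_false,
        false_and, if_true, if_false, ite_true, ite_false, and_self, Pi.add_apply, Pi.sub_apply, Pi.smul_apply, smul_eq_mul, Fin.isValue,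
        mul_ite, ite_mul, mul_zero, zero_mul, mul_one, one_mul, add_zero, zero_add]
      try norm_num [Fin.ext_iff, Prod.ext_iff]
      try (push_cast; ring)
  have hM : Mex p q = Umat * Matrix.diagonal (lamf p q) * Vmat := by
    have h1 : Mex p q * (Umat * Vmat)
        = Umat * Matrix.diagonal (lamf p q) * Vmat := by
      rw [← Matrix.mul_assoc, hMU]
    rwa [hUV, Matrix.mul_one] at h1
  rw [hM, my_charpoly_conj _ _ _ hUV, my_charpoly_diag]
  simp (config := { decide := true }) only [Fintype.prod_prod_type, Fin.prod_univ_three, lamf]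
  norm_num [Prod.mk.injEq]
  ring

end
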